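/- If S is a gated subgraph of a partial cube G, then the contraction π_f(S) is a gated subgraph of π_f(G). -/

import Mathlib

/-- The hypercube graph on `Λ → Bool`: two vertices are adjacent iff they differ
in exactly one coordinate. -/
def Qcube (Λ : Type*) : SimpleGraph (Λ → Bool) where
  Adj x y := ∃ f, x f ≠ y f ∧ ∀ g, g ≠ f → x g = y g
  symm := by
    refine ⟨?_⟩
    rintro x y ⟨f, hf, h⟩
    exact ⟨f, Ne.symm hf, fun g hg => (h g hg).symm⟩
  loopless := by
    refine ⟨?_⟩
    rintro x ⟨f, hf, _⟩
    exact hf rfl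

variable {Λ : Type*}

/-- The graph induced by the hypercube on a set `V` of vertices. -/
def pcGraph (V : Set (Λ → Bool)) : SimpleGraph V := (Qcube Λ).induce V

/-- `V` determines a partial cube: the induced graph is connected and its
graph distance coincides with the Hamming distance. -/
def IsPartialCube (V : Set (Λ → Bool)) : Prop :=
  (pcGraph V).Connected ∧
    ∀ x y : V, (pcGraph V).dist x y = Set.ncard {f | (x : Λ → Bool) f ≠ (y : Λ → Bool) f}

/-- `W` is a convex subgraph of the partial cube on `V`. -/
def ConvexIn (V W : Set (Λ → Bool)) : Prop :=
  W ⊆ V ∧ ∀ u v w : V, (u : Λ → Bool) ∈ W → (v : Λ → Bool) ∈ W →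
    (pcGraph V).dist u w + (pcGraph V).dist w v = (pcGraph V).dist u v →
      (w : Λ → Bool) ∈ W

/-- `W` is a gated subgraph of the partial cube on `V`: every vertex has a gate in `W`. -/
def GatedIn (V W : Set (Λ → Bool)) : Prop :=
  W ⊆ V ∧ ∀ x : V, ∃ g : V, (g : Λ → Bool) ∈ W ∧
    ∀ y : V, (y : Λ → Bool) ∈ W →
      (pcGraph V).dist x y = (pcGraph V).dist x g + (pcGraph V).dist g y

/-- The convex hull of a set `A` inside the partial cube on `V`. -/
def convexHullIn (V A : Set (Λ → Bool)) : Set (Λ → Bool) :=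
  ⋂₀ {W | ConvexIn V W ∧ A ⊆ W}

/-- The gated hull of a set `A` inside the partial cube on `V`. -/
def gatedHullIn (V A : Set (Λ → Bool)) : Set (Λ → Bool) :=
  ⋂₀ {W | GatedIn V W ∧ A ⊆ W}

/-- The interval between `u` and `v` in the partial cube on `V`. -/
def intervalIn (V : Set (Λ → Bool)) (u v : V) : Set V :=
  {w | (pcGraph V).dist u w + (pcGraph V).dist w v = (pcGraph V).dist u v}

/-- Contraction of the Θ-class of coordinate `f`: delete coordinate `f`. -/
def contr (f : Λ) (x : Λ → Bool) : {g : Λ // g ≠ f} → Bool := fun g => x g.1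

/-- Contraction of a whole set of coordinates `B`. -/
def proj (B : Set Λ) (x : Λ → Bool) : {g : Λ // g ∉ B} → Bool := fun g => x g.1

/-- The Θ-class `E_f` crosses `S`: `S` meets both halfspaces of coordinate `f`. -/
def Crosses (f : Λ) (S : Set (Λ → Bool)) : Prop :=
  (∃ x ∈ S, x f = true) ∧ (∃ x ∈ S, x f = false)

/-- The Θ-class `E_f` (of edges of the graph on `V`) is disjoint from `S`:
no edge in class `f` has an endpoint in `S`. -/
def DisjointFrom (f : Λ) (V S : Set (Λ → Bool)) : Prop :=
  ∀ x ∈ V, ∀ y ∈ V, (Qcube Λ).Adj x y → x f ≠ y f → x ∉ S ∧ y ∉ S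

/-- Adjacency in a cycle on `ZMod n` (for `n = 2` this is `K₂`). -/
def cycleAdj (n : ℕ) (x y : ZMod n) : Prop := x ≠ y ∧ (y = x + 1 ∨ x = y + 1)

/-- The cycle graph on `ZMod n`. -/
def cycGraph (n : ℕ) : SimpleGraph (ZMod n) where
  Adj x y := cycleAdj n x y
  symm := by
    refine ⟨?_⟩
    rintro x y ⟨h1, h2⟩
    exact ⟨Ne.symm h1, h2.symm⟩
  loopless := by
    refine ⟨?_⟩
    rintro x ⟨h1, _⟩
    exact h1 rfl

/-- The Cartesian product of the cycles/edges `ZMod (F i)`. -/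
def edgeCycleProd {m : ℕ} (F : Fin m → ℕ) : SimpleGraph (∀ i, ZMod (F i)) where
  Adj x y := ∃ i, cycleAdj (F i) (x i) (y i) ∧ ∀ j, j ≠ i → x j = y j
  symm := by
    refine ⟨?_⟩
    rintro x y ⟨i, ⟨h1, h2⟩, h3⟩
    exact ⟨i, ⟨Ne.symm h1, h2.symm⟩, fun j hj => (h3 j hj).symm⟩
  loopless := by
    refine ⟨?_⟩
    rintro x ⟨i, ⟨h1, _⟩, _⟩
    exact h1 rfl

/-- A graph is (isomorphic to) a Cartesian product of edges and even cycles. -/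
def IsEdgeCycleProduct {α : Type*} (H : SimpleGraph α) : Prop :=
  ∃ (m : ℕ) (F : Fin m → ℕ), (∀ i, Even (F i) ∧ 2 ≤ F i) ∧
    Nonempty (H ≃g edgeCycleProd F)

/-- The vertex set of `Q₃⁻`, the 3-cube minus one vertex. -/
def Q3minusSet : Set (Fin 3 → Bool) := {x : Fin 3 → Bool | x ≠ fun _ => true}

/-- A partial cube is hypercellular if no pc-minor of it (a contraction of a
convex subgraph, i.e. of a restriction) is isomorphic to `Q₃⁻`. -/
def Hypercellular (V : Set (Λ → Bool)) : Prop :=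
  IsPartialCube V ∧ ∀ (B : Set Λ) (W : Set (Λ → Bool)), ConvexIn V W →
    IsEmpty (pcGraph (proj B '' W) ≃g pcGraph Q3minusSet)

/-- A cell of the partial cube on `V`: a convex subgraph isomorphic to a
Cartesian product of edges and even cycles. -/
def IsCellIn (V X : Set (Λ → Bool)) : Prop :=
  ConvexIn V X ∧ IsEdgeCycleProduct (pcGraph X)


/-!
In a partial cube the graph distance is the Hamming distance, so `d(x, y) = d(x, g) + d(g, y)`
says exactly that `g` agrees with `x` and `y` on every coordinate where `x` and `y` agree.
Deleting the coordinate `f` turns the partial cube into a partial cube again (a geodesic loses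
precisely its edge in `E_f`, if any), whose distance is the Hamming distance on the remaining
coordinates. The agreement condition survives the deletion of a coordinate, so the image of a
gate of `x` is a gate of the image of `x`.
-/

/-- Over `Bool`, the sets `{x ≠ y}` and `{x ≠ g} ∩ {g ≠ y}` partition `{x ≠ g} ∪ {g ≠ y}`. -/
lemma ncard_ne_eq_add_iff {ι : Type*} {x g y : ι → Bool}
    (hxg : {i | x i ≠ g i}.Finite) (hgy : {i | g i ≠ y i}.Finite) :
    {i | x i ≠ y i}.ncard = {i | x i ≠ g i}.ncard + {i | g i ≠ y i}.ncard ↔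
      ∀ i, x i = y i → g i = x i := by
  set D₁ := {i | x i ≠ g i}
  set D₂ := {i | g i ≠ y i}
  have hunion : {i | x i ≠ y i} ∪ (D₁ ∩ D₂) = D₁ ∪ D₂ := by
    ext i
    simp only [Set.mem_union, Set.mem_inter_iff, D₁, D₂, Set.mem_ofPred_eq]
    cases x i <;> cases g i <;> cases y i <;> simp
  have hdisj : Disjoint {i | x i ≠ y i} (D₁ ∩ D₂) := by
    simp only [Set.disjoint_left, Set.mem_inter_iff, D₁, D₂, Set.mem_ofPred_eq]
    intro i
    cases x i <;> cases g i <;> cases y i <;> simp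
  have hcount : {i | x i ≠ y i}.ncard + 2 * (D₁ ∩ D₂).ncard = D₁.ncard + D₂.ncard := by
    have := Set.ncard_union_add_ncard_inter D₁ D₂ hxg hgy
    have hfin : {i | x i ≠ y i}.Finite := (hxg.union hgy).subset (hunion ▸ Set.subset_union_left)
    rw [← hunion, Set.ncard_union_eq hdisj hfin (hxg.inter_of_left D₂)] at this
    omega
  have hempty : D₁ ∩ D₂ = ∅ ↔ ∀ i, x i = y i → g i = x i := by
    simp only [Set.eq_empty_iff_forall_notMem, Set.mem_inter_iff, D₁, D₂, Set.mem_ofPred_eq]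
    refine forall_congr' fun i => ?_
    cases x i <;> cases g i <;> cases y i <;> simp
  rw [← hempty, ← Set.ncard_eq_zero (hxg.inter_of_left D₂)]
  omega

lemma ncard_ne_le_length {W : Set (Λ → Bool)} {u v : W} (p : (pcGraph W).Walk u v) :
    {i | (u : Λ → Bool) i ≠ (v : Λ → Bool) i}.ncard ≤ p.length := by
  classical
  obtain ⟨s, hs, hsub⟩ : ∃ s : Finset Λ,
      s.card ≤ p.length ∧ {i | (u : Λ → Bool) i ≠ (v : Λ → Bool) i} ⊆ s := by
    induction p with
    | nil => exact ⟨∅, le_rfl, by simp⟩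
    | cons hadj q ih =>
      rw [SimpleGraph.Walk.length_cons]
      obtain ⟨s, hs, hsub⟩ := ih
      obtain ⟨j, -, hj⟩ := hadj
      refine ⟨insert j s, (Finset.card_insert_le j s).trans (by omega), fun i hi => ?_⟩
      by_cases hij : i = j
      · simp [hij]
      · exact Finset.mem_insert_of_mem (hsub fun h => hi ((hj i hij).trans h))
  exact (Set.ncard_le_ncard hsub s.finite_toSet).trans (by simpa using hs)

lemma ncard_ne_contr (f : Λ) (a b : Λ → Bool) :
    {i | contr f a i ≠ contr f b i}.ncard = ({i | a i ≠ b i} \ {f}).ncard := by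
  have himage : Subtype.val '' {i | contr f a i ≠ contr f b i} = {i | a i ≠ b i} \ {f} := by
    ext i
    constructor
    · rintro ⟨⟨i, hif⟩, hne, rfl⟩
      exact ⟨hne, hif⟩
    · rintro ⟨hne, hif⟩
      exact ⟨⟨i, hif⟩, hne, rfl⟩
  rw [← himage, Set.ncard_image_of_injective _ Subtype.val_injective]

lemma exists_walk_contr {V : Set (Λ → Bool)} (f : Λ) {u v : V} (p : (pcGraph V).Walk u v) :
    ∃ q : (pcGraph (contr f '' V)).Walk (V.imageFactorization (contr f) u)
        (V.imageFactorization (contr f) v),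
      q.length ≤ p.length ∧ ((u : Λ → Bool) f ≠ (v : Λ → Bool) f → q.length < p.length) := by
  induction p with
  | nil => exact ⟨.nil, le_rfl, fun h => absurd rfl h⟩
  | @cons a b c hadj p ih =>
    obtain ⟨q, hle, hlt⟩ := ih
    obtain ⟨j, hj, hrest⟩ := id hadj
    rw [SimpleGraph.Walk.length_cons]
    by_cases hjf : j = f
    · subst hjf
      have hab : V.imageFactorization (contr j) a = V.imageFactorization (contr j) b :=
        Subtype.ext (funext fun i => hrest i.1 i.2)
      refine ⟨q.copy hab.symm rfl, by simp only [SimpleGraph.Walk.length_copy]; omega, fun _ => ?_⟩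
      simp only [SimpleGraph.Walk.length_copy]
      omega
    · have hadj' : (pcGraph (contr f '' V)).Adj (V.imageFactorization (contr f) a)
          (V.imageFactorization (contr f) b) :=
        ⟨⟨j, hjf⟩, hj, fun i hij => hrest i.1 fun h => hij (Subtype.ext h)⟩
      have haf : (a : Λ → Bool) f = (b : Λ → Bool) f := hrest f (Ne.symm hjf)
      refine ⟨.cons hadj' q, by simp only [SimpleGraph.Walk.length_cons]; omega, fun hac => ?_⟩
      have := hlt fun hbc => hac (haf.trans hbc)
      simp only [SimpleGraph.Walk.length_cons]
      omega

namespace IsPartialCube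

variable {V : Set (Λ → Bool)}

lemma finite_ne (hV : IsPartialCube V) (x y : V) :
    {i | (x : Λ → Bool) i ≠ (y : Λ → Bool) i}.Finite := by
  by_contra hinf
  have hxy : x = y := hV.1.dist_eq_zero_iff.mp (by rw [hV.2, Set.Infinite.ncard hinf])
  exact hinf (by simp [hxy])

lemma dist_eq_add_iff (hV : IsPartialCube V) (x g y : V) :
    (pcGraph V).dist x y = (pcGraph V).dist x g + (pcGraph V).dist g y ↔
      ∀ i, (x : Λ → Bool) i = (y : Λ → Bool) i → (g : Λ → Bool) i = (x : Λ → Bool) i := by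
  rw [hV.2, hV.2, hV.2]
  exact ncard_ne_eq_add_iff (hV.finite_ne x g) (hV.finite_ne g y)

theorem image_contr (hV : IsPartialCube V) (f : Λ) : IsPartialCube (contr f '' V) := by
  obtain ⟨hconn, hdist⟩ := hV
  have hsurj := V.imageFactorization_surjective (f := contr f)
  refine ⟨?_, fun x y => ?_⟩
  · rw [SimpleGraph.connected_iff]
    refine ⟨fun x y => ?_, hconn.nonempty.map (V.imageFactorization (contr f))⟩
    obtain ⟨a, rfl⟩ := hsurj x
    obtain ⟨b, rfl⟩ := hsurj y
    obtain ⟨q, -⟩ := exists_walk_contr f (hconn a b).some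
    exact ⟨q⟩
  obtain ⟨a, rfl⟩ := hsurj x
  obtain ⟨b, rfl⟩ := hsurj y
  obtain ⟨p, hp⟩ := (hconn a b).exists_walk_length_eq_dist
  obtain ⟨q, hle, hlt⟩ := exists_walk_contr f p
  obtain ⟨r, hr⟩ := SimpleGraph.Reachable.exists_walk_length_eq_dist ⟨q⟩
  refine le_antisymm ?_ (hr ▸ ncard_ne_le_length r)
  refine (SimpleGraph.dist_le q).trans ?_
  change q.length ≤ {i | contr f a i ≠ contr f b i}.ncard
  rw [ncard_ne_contr]
  have hpD : p.length = {i | (a : Λ → Bool) i ≠ (b : Λ → Bool) i}.ncard := hp.trans (hdist a b)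
  by_cases hab : (a : Λ → Bool) f = (b : Λ → Bool) f
  · rw [Set.sdiff_singleton_eq_self (by simpa using hab)]
    omega
  · rw [Set.ncard_sdiff_singleton_of_mem hab]
    have := hlt hab
    omega

end IsPartialCube

/-- If `S` is a gated subgraph of the partial cube on `V`, then `π_f(S)` is a
gated subgraph of `π_f(G)`. -/
theorem stmt11 (V S : Set (Λ → Bool)) (hV : IsPartialCube V) (hS : GatedIn V S)
    (f : Λ) : GatedIn (contr f '' V) (contr f '' S) := by
  refine ⟨Set.image_mono hS.1, ?_⟩
  rintro ⟨_, x, hxV, rfl⟩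
  obtain ⟨g, hgS, hgate⟩ := hS.2 ⟨x, hxV⟩
  refine ⟨V.imageFactorization (contr f) g, ⟨g, hgS, rfl⟩, ?_⟩
  rintro ⟨_, hyV⟩ ⟨y, hyS, rfl⟩
  have hbetween := (hV.dist_eq_add_iff _ _ _).mp (hgate ⟨y, hS.1 hyS⟩ hyS)
  exact ((hV.image_contr f).dist_eq_add_iff _ _ _).mpr fun i => hbetween i.1
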